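/- Let p₁,…,pₙ be linearly independent polynomials over a field of characteristic zero. The Wronskian W(p₁,…,pₙ) is a nonzero constant if and only if there exists a nonsingular n×n matrix A with pᵢ(t) = Σ_{j=1}^{n} Aᵢⱼ t^{j−1} for all i (equivalently, each pᵢ has degree at most n−1). -/

import Mathlib

open Polynomial

/-- The Wronskian of polynomials `p 0, …, p (n-1)`: the determinant of the matrix whose
`(i,j)` entry is the `i`-th derivative of `p j`. -/
noncomputable def polyWronskian {K : Type*} [CommRing K] {n : ℕ} (p : Fin n → K[X]) : K[X] :=
  Matrix.det (Matrix.of fun i j : Fin n => (fun q : K[X] => Polynomial.derivative q)^[(i : ℕ)] (p j))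

/-!
Changing basis by a matrix `B` multiplies the Wronskian by `det B`, and the Wronskian of
`1, t, …, t^(n-1)` is the nonzero constant `∏ i!`; this gives one direction. Conversely, the span
`V` of the `pᵢ` contains at least `dim V = n` distinct degrees. If some `pₖ` had degree `≥ n`, pick
`q₀, …, q_{n-1} ∈ V` of degrees `d₀ < ⋯ < d_{n-1}`, one of them `deg pₖ`. Their Wronskian is
again a constant, yet its coefficient of `t^(∑ (dᵢ - i))` is `∏ lc(qᵢ)` times a Vandermonde
determinant in the `dᵢ`, which is nonzero in characteristic zero. Hence `dᵢ = i` for all `i`,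
contradicting `deg pₖ ≥ n`.
-/

open scoped Matrix Nat

namespace Polynomial

variable {R : Type*} [CommRing R]

theorem coeff_prod_sum_of_natDegree_le {ι : Type*} (s : Finset ι) (f : ι → R[X]) (e : ι → ℕ)
    (h : ∀ i ∈ s, (f i).natDegree ≤ e i) :
    (∏ i ∈ s, f i).coeff (∑ i ∈ s, e i) = ∏ i ∈ s, (f i).coeff (e i) := by
  classical
  induction s using Finset.cons_induction with
  | empty => simp
  | cons a s ha ih =>
    simp only [Finset.forall_mem_cons] at h
    rw [Finset.prod_cons, Finset.sum_cons, Finset.prod_cons,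
      coeff_mul_add_eq_of_natDegree_le h.1
        ((natDegree_prod_le s f).trans (Finset.sum_le_sum h.2)), ih h.2]

theorem eq_sum_fin_C_mul_X_pow {S : Type*} [Semiring S] {p : S[X]} {n : ℕ} (hp : p.natDegree < n) :
    p = ∑ j : Fin n, C (p.coeff j) * X ^ (j : ℕ) := by
  rw [Fin.sum_univ_eq_sum_range (fun j => C (p.coeff j) * X ^ j)]
  exact as_sum_range_C_mul_X_pow' p hp

end Polynomial

theorem Fin.val_le_of_strictMono {n : ℕ} {d : Fin n → ℕ} (hd : StrictMono d) (i : Fin n) :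
    (i : ℕ) ≤ d i := by
  obtain ⟨k, hk⟩ := i
  induction k with
  | zero => exact Nat.zero_le _
  | succ k ih =>
    have hlt := hd (show (⟨k, by omega⟩ : Fin n) < ⟨k + 1, hk⟩ from Nat.lt_succ_self k)
    have hle := ih (by omega)
    simp only at hle ⊢
    omega

section Wronskian

variable {R : Type*} [CommRing R] {n : ℕ}

theorem polyWronskian_of_eq_sum_C_mul (B : Matrix (Fin n) (Fin n) R) {p q : Fin n → R[X]}
    (hq : ∀ i, q i = ∑ j, C (B i j) * p j) :
    polyWronskian q = C B.det * polyWronskian p := by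
  have hmat : (Matrix.of fun i j : Fin n => derivative^[(i : ℕ)] (q j))
      = (Matrix.of fun i j : Fin n => derivative^[(i : ℕ)] (p j)) * (B.map C)ᵀ := by
    refine Matrix.ext fun i j => ?_
    simp only [Matrix.mul_apply, Matrix.of_apply, Matrix.transpose_apply, Matrix.map_apply, hq j,
      iterate_derivative_sum, iterate_derivative_C_mul]
    exact Finset.sum_congr rfl fun k _ => mul_comm _ _
  change Matrix.det (Matrix.of fun i j : Fin n => derivative^[(i : ℕ)] (q j)) = _
  rw [hmat, Matrix.det_mul, Matrix.det_transpose, ← RingHom.mapMatrix_apply, ← RingHom.map_det,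
    mul_comm, polyWronskian]

theorem polyWronskian_X_pow :
    polyWronskian (fun j : Fin n => (X : R[X]) ^ (j : ℕ)) = C (∏ i : Fin n, ((i : ℕ)! : R)) := by
  rw [polyWronskian, Matrix.det_of_isUpperTriangular, map_prod]
  · refine Finset.prod_congr rfl fun i _ => ?_
    simp [iterate_derivative_X_pow_eq_C_mul, Nat.descFactorial_self]
  · intro i j hij
    simp [iterate_derivative_X_pow_eq_C_mul, Nat.descFactorial_eq_zero_iff_lt.mpr (id hij : j < i)]


theorem coeff_prod_iterate_derivative {q : Fin n → R[X]} {d : Fin n → ℕ}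
    (hq : ∀ j, (q j).natDegree = d j) (hd : ∀ j : Fin n, (j : ℕ) ≤ d j) (σ : Equiv.Perm (Fin n)) :
    (∏ j, derivative^[σ j] (q j)).coeff (∑ j : Fin n, (d j - j))
      = ∏ j, ((d j).descFactorial (σ j) : R) * (q j).leadingCoeff := by
  by_cases hσ : ∀ j, (σ j : ℕ) ≤ d j
  · have hsum : ∑ j : Fin n, (d j - j) = ∑ j, (d j - (σ j : ℕ)) := by
      rw [Finset.sum_tsub_distrib _ fun j _ => hd j, Finset.sum_tsub_distrib _ fun j _ => hσ j,
        Equiv.sum_comp σ (fun j : Fin n => (j : ℕ))]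
    rw [hsum, coeff_prod_sum_of_natDegree_le _ _ _ fun j _ => hq j ▸ natDegree_iterate_derivative _ _]
    refine Finset.prod_congr rfl fun j _ => ?_
    rw [coeff_iterate_derivative, Nat.sub_add_cancel (hσ j), nsmul_eq_mul, leadingCoeff, hq j]
  · obtain ⟨j, hj⟩ := not_forall_not.mp (by simpa using hσ)
    rw [Finset.prod_eq_zero (Finset.mem_univ j) (iterate_derivative_eq_zero (hq j ▸ hj)),
      Finset.prod_eq_zero (Finset.mem_univ j)
        (by rw [Nat.descFactorial_eq_zero_iff_lt.mpr hj, Nat.cast_zero, zero_mul]), coeff_zero]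

theorem coeff_polyWronskian {q : Fin n → R[X]} {d : Fin n → ℕ}
    (hq : ∀ j, (q j).natDegree = d j) (hd : ∀ j : Fin n, (j : ℕ) ≤ d j) :
    (polyWronskian q).coeff (∑ j : Fin n, (d j - j))
      = (∏ j, (q j).leadingCoeff) * (Matrix.of fun i j : Fin n => ((d j).descFactorial i : R)).det := by
  rw [polyWronskian, Matrix.det_apply, Matrix.det_apply, finsetSum_coeff, Finset.mul_sum]
  refine Finset.sum_congr rfl fun σ _ => ?_
  rw [coeff_smul, mul_smul_comm, mul_comm, ← Finset.prod_mul_distrib]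
  exact congrArg _ (coeff_prod_iterate_derivative hq hd σ)

theorem det_descFactorial_ne_zero [IsDomain R] [CharZero R] {d : Fin n → ℕ}
    (hd : Function.Injective d) :
    (Matrix.of fun i j : Fin n => ((d j).descFactorial i : R)).det ≠ 0 := by
  have hvdm := Matrix.det_eval_matrixOfPolynomials_eq_det_vandermonde (fun i => (d i : R))
    (fun i => descPochhammer R i) (fun i => descPochhammer_natDegree R i)
    (fun i => monic_descPochhammer R i)
  simp only [descPochhammer_eval_eq_descFactorial] at hvdm
  have hne := (Matrix.det_vandermonde_ne_zero_iff (R := R)).mpr (Nat.cast_injective.comp hd)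
  rw [show Nat.cast ∘ d = fun i => (d i : R) from rfl, hvdm] at hne
  rwa [← Matrix.det_transpose]

end Wronskian

section Subspace

variable {K : Type*} [Field K]

theorem finrank_le_card_of_natDegree_mem (V : Submodule K K[X]) (s : Finset ℕ)
    (hs : ∀ v ∈ V, v ≠ 0 → v.natDegree ∈ s) :
    Module.finrank K V ≤ s.card := by
  let coeffs : V →ₗ[K] (s → K) := (LinearMap.pi fun m : s => lcoeff K m) ∘ₗ V.subtype
  have hinj : Function.Injective coeffs := by
    refine (injective_iff_map_eq_zero coeffs).mpr fun v hv => ?_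
    by_contra hv0
    have hlc := congrFun hv ⟨_, hs v v.2 (by simpa using hv0)⟩
    exact (leadingCoeff_ne_zero.mpr (by simpa using hv0)) hlc
  simpa using LinearMap.finrank_le_finrank_of_injective hinj

theorem exists_strictMono_natDegree (V : Submodule K K[X]) {N : ℕ} (hV : V ≤ degreeLE K N)
    {n : ℕ} (hn : n ≤ Module.finrank K V) (hn0 : n ≠ 0) {v : K[X]} (hv : v ∈ V) (hv0 : v ≠ 0) :
    ∃ q : Fin n → K[X], (∀ i, q i ∈ V) ∧ (∀ i, q i ≠ 0) ∧ StrictMono (fun i => (q i).natDegree) ∧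
      ∃ i, (q i).natDegree = v.natDegree := by
  classical
  let degrees := (Finset.range (N + 1)).filter fun m => ∃ w ∈ V, w ≠ 0 ∧ w.natDegree = m
  have hmem : ∀ w ∈ V, w ≠ 0 → w.natDegree ∈ degrees := fun w hw hw0 =>
    Finset.mem_filter.mpr ⟨Finset.mem_range_succ_iff.mpr
      (natDegree_le_iff_degree_le.mpr (mem_degreeLE.mp (hV hw))), w, hw, hw0, rfl⟩
  obtain ⟨t, hvt, htd, htn⟩ := Finset.exists_subsuperset_card_eq
    (Finset.singleton_subset_iff.mpr (hmem v hv hv0)) (by simpa [Nat.one_le_iff_ne_zero])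
    (hn.trans (finrank_le_card_of_natDegree_mem V degrees hmem))
  let d := t.orderEmbOfFin htn
  have hd : ∀ i, ∃ w ∈ V, w ≠ 0 ∧ w.natDegree = d i := fun i =>
    (Finset.mem_filter.mp (htd (t.orderEmbOfFin_mem htn i))).2
  choose q hqV hq0 hqd using hd
  obtain ⟨i, hi⟩ : v.natDegree ∈ Set.range d := by
    rw [Finset.range_orderEmbOfFin]
    exact Finset.singleton_subset_iff.mp hvt
  refine ⟨q, hqV, hq0, ?_, i, (hqd i).trans hi⟩
  simpa only [hqd] using d.strictMono

end Subspace

theorem natDegree_lt_of_polyWronskian_eq_C {K : Type*} [Field K] [CharZero K] {n : ℕ} {p : Fin n → K[X]} (hind : LinearIndependent K p)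
    {c : K} (hW : polyWronskian p = C c) (k : Fin n) :
    (p k).natDegree < n := by
  by_contra! hk
  let V := Submodule.span K (Set.range p)
  let N := Finset.univ.sup fun i => (p i).natDegree
  have hV : V ≤ degreeLE K N := Submodule.span_le.mpr <| Set.range_subset_iff.mpr fun i =>
    mem_degreeLE.mpr (degree_le_of_natDegree_le (Finset.le_sup (f := fun i => (p i).natDegree)
      (Finset.mem_univ i)))
  obtain ⟨q, hqV, hq0, hmono, j, hj⟩ := exists_strictMono_natDegree V hV
    (by rw [finrank_span_eq_card hind, Fintype.card_fin]) (Fin.pos k).ne'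
    (Submodule.subset_span ⟨k, rfl⟩) (hind.ne_zero k)
  choose B hB using fun i => (Submodule.mem_span_range_iff_exists_fun K).mp (hqV i)
  have hWq : polyWronskian q = C ((Matrix.of B).det * c) := by
    rw [polyWronskian_of_eq_sum_C_mul (Matrix.of B) (p := p) fun i => by simp [← hB i, smul_eq_C_mul],
      hW, C_mul]
  have hcoeff := coeff_polyWronskian (fun i => rfl) (Fin.val_le_of_strictMono hmono)
  rw [hWq] at hcoeff
  have hsum : ∑ i : Fin n, ((q i).natDegree - i) = 0 := by
    by_contra hne
    rw [coeff_C_of_ne_zero hne] at hcoeff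
    exact mul_ne_zero (Finset.prod_ne_zero_iff.mpr fun i _ => leadingCoeff_ne_zero.mpr (hq0 i))
      (det_descFactorial_ne_zero hmono.injective) hcoeff.symm
  have := Finset.sum_eq_zero_iff.mp hsum j (Finset.mem_univ j)
  omega

theorem wronskian_nonzero_const_iff_transition
    {K : Type*} [Field K] [CharZero K] {n : ℕ} (p : Fin n → K[X])
    (hind : LinearIndependent K p) :
    (∃ c : K, c ≠ 0 ∧ polyWronskian p = C c) ↔
      (∃ A : Matrix (Fin n) (Fin n) K, IsUnit A.det ∧
        ∀ i, p i = ∑ j, C (A i j) * X ^ (j : ℕ)) := by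
  have hfact : ∏ i : Fin n, ((i : ℕ)! : K) ≠ 0 :=
    Finset.prod_ne_zero_iff.mpr fun i _ => Nat.cast_ne_zero.mpr (Nat.factorial_ne_zero _)
  constructor
  · rintro ⟨c, hc, hW⟩
    let A : Matrix (Fin n) (Fin n) K := Matrix.of fun i j => (p i).coeff j
    have hp : ∀ i, p i = ∑ j, C (A i j) * X ^ (j : ℕ) := fun i =>
      eq_sum_fin_C_mul_X_pow (natDegree_lt_of_polyWronskian_eq_C hind hW i)
    have hWA := polyWronskian_of_eq_sum_C_mul A hp
    rw [hW, polyWronskian_X_pow, ← C_mul, C_inj] at hWA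
    exact ⟨A, isUnit_iff_ne_zero.mpr (left_ne_zero_of_mul (hWA ▸ hc)), hp⟩
  · rintro ⟨A, hA, hp⟩
    refine ⟨A.det * ∏ i : Fin n, ((i : ℕ)! : K), mul_ne_zero hA.ne_zero hfact, ?_⟩
    rw [polyWronskian_of_eq_sum_C_mul A hp, polyWronskian_X_pow, C_mul]
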